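/- Let p(x) ∈ F_q[x] be irreducible of degree m, and let k ≥ 1. Then the rings F_q[x,y]/(p(x), (y-x)^k) and F_q[y]/(p(y)^k) are isomorphic as F_q-algebras. -/

import Mathlib

open Polynomial

/-- Uniqueness part of Hensel's lemma for nilpotent perturbations. -/
lemma hensel_unique' {S : Type*} [CommRing S] (f : S[X]) (a b : S)
    (ha : f.eval a = 0) (hb : f.eval b = 0)
    (hu : IsUnit (f.derivative.eval a)) (hn : IsNilpotent (b - a)) : b = a := by
  obtain ⟨c, hc⟩ := f.binomExpansion a (b - a)
  rw [add_sub_cancel, hb, ha, zero_add] at hc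
  have hunit : IsUnit (f.derivative.eval a + c * (b - a)) :=
    ((Commute.all c (b - a)).isNilpotent_mul_left hn).isUnit_add_left_of_commute hu
      (Commute.all _ _)
  have hz : (b - a) * (f.derivative.eval a + c * (b - a)) = 0 := by
    linear_combination -hc
  have hba : b - a = 0 := by
    obtain ⟨v, hv⟩ := hunit
    have h2 := congrArg (· * (↑v⁻¹ : S)) hz
    simpa [← hv, mul_assoc] using h2
  exact sub_eq_zero.mp hba

/-- Existence part of Hensel's lemma for ideals with a vanishing power. -/
lemma newton_exists' {R : Type*} [CommRing R] (f : R[X]) (J : Ideal R)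
    (N : ℕ) (hJ : J ^ N = ⊥) (b : R) (hu : IsUnit (f.derivative.eval b))
    (hb : f.eval b ∈ J) : ∃ a : R, f.eval a = 0 ∧ a - b ∈ J := by
  have hnil : ∀ x ∈ J, IsNilpotent x := fun x hx => ⟨N, by
    have := Ideal.pow_mem_pow hx N
    rwa [hJ, Ideal.mem_bot] at this⟩
  have key : ∀ i : ℕ, ∃ a : R, f.eval a ∈ J ^ (i + 1) ∧ a - b ∈ J := by
    intro i
    induction i with
    | zero => exact ⟨b, by simpa using hb, by simp⟩
    | succ i ih =>
      obtain ⟨a, ha1, ha2⟩ := ih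
      have hua : IsUnit (f.derivative.eval a) := by
        obtain ⟨c, hc⟩ := f.derivative.binomExpansion b (a - b)
        rw [add_sub_cancel] at hc
        rw [hc, add_assoc]
        refine IsNilpotent.isUnit_add_left_of_commute ?_ hu (Commute.all _ _)
        have hab : IsNilpotent (a - b) := hnil _ ha2
        exact Commute.isNilpotent_add (Commute.all _ _)
          ((Commute.all _ _).isNilpotent_mul_left hab)
          ((Commute.all _ _).isNilpotent_mul_left (hab.pow_of_pos two_ne_zero))
      obtain ⟨v, hv⟩ := hua
      set t : R := -(f.eval a * ↑v⁻¹) with ht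
      have htJ : t ∈ J ^ (i + 1) := neg_mem (Ideal.mul_mem_right _ _ ha1)
      obtain ⟨c, hc⟩ := f.binomExpansion a t
      have h1 : f.derivative.eval a * t = -f.eval a := by
        rw [ht, ← hv, mul_neg, neg_inj, mul_comm (↑v : R), mul_assoc, Units.inv_mul, mul_one]
      refine ⟨a + t, ?_, ?_⟩
      · rw [hc, h1]
        have : f.eval a + -f.eval a + c * t ^ 2 = c * t ^ 2 := by ring
        rw [this]
        refine Ideal.mul_mem_left _ _ ?_
        have ht2 : t ^ 2 ∈ (J ^ (i + 1)) ^ 2 := Ideal.pow_mem_pow htJ 2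
        rw [← pow_mul] at ht2
        exact Ideal.pow_le_pow_right (by omega) ht2
      · have htJ1 : t ∈ J := Ideal.pow_le_self (Nat.succ_ne_zero i) htJ
        have : a + t - b = (a - b) + t := by ring
        rw [this]
        exact add_mem ha2 htJ1
  obtain ⟨a, ha1, ha2⟩ := key N
  refine ⟨a, ?_, ha2⟩
  have hle : J ^ (N + 1) ≤ J ^ N := Ideal.pow_le_pow_right (Nat.le_succ N)
  rw [hJ] at hle
  exact Ideal.mem_bot.mp (hle ha1)

set_option maxHeartbeats 2000000 in
set_option synthInstance.maxHeartbeats 400000 in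
/-- Let `p ∈ F_q[x]` be (monic) irreducible of degree `m ≥ 1` and `k ≥ 1`.
Then `F_q[x,y]/(p(x), (y-x)^k)` and `F_q[y]/(p(y)^k)` are isomorphic `F_q`-algebras.
Here `x = X 0`, `y = X 1` in `MvPolynomial (Fin 2) F`. -/
theorem stmt8 (q m k : ℕ) (F : Type*) [Field F] [Fintype F] (hF : Fintype.card F = q)
    (p : Polynomial F) (hmonic : p.Monic) (hirr : Irreducible p)
    (hdeg : p.natDegree = m) (hm : 1 ≤ m) (hk : 1 ≤ k)
    (I : Ideal (MvPolynomial (Fin 2) F))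
    (hI : I = Ideal.span
      {Polynomial.aeval (MvPolynomial.X (0 : Fin 2)) p,
        (MvPolynomial.X (1 : Fin 2) - MvPolynomial.X (0 : Fin 2)) ^ k}) :
    Nonempty ((MvPolynomial (Fin 2) F ⧸ I) ≃ₐ[F] (Polynomial F ⧸ Ideal.span {p ^ k})) := by
  classical
  subst hI
  obtain ⟨u, v, huv⟩ : IsCoprime p (derivative p) :=
    PerfectField.separable_of_irreducible hirr
  rw [add_comm] at huv
  -- huv : v * derivative p + u * p = 1
  set π : Polynomial F →ₐ[F] (Polynomial F ⧸ Ideal.span {p ^ k}) := Ideal.Quotient.mkₐ F (Ideal.span {p ^ k}) with hπ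
  have hπg : ∀ g : Polynomial F, Polynomial.aeval (π X) g = π g := fun g => by
    rw [aeval_algHom_apply, Polynomial.aeval_X_left_apply]
  have hπ0 : ∀ g : Polynomial F, g ∈ Ideal.span {p ^ k} → π g = 0 := fun g hg => by
    simpa [hπ, Ideal.Quotient.mkₐ_eq_mk] using (Ideal.Quotient.eq_zero_iff_mem).mpr hg
  have hpk0 : (π p) ^ k = 0 := by
    rw [← map_pow]
    exact hπ0 _ (Ideal.mem_span_singleton_self _)
  set J : Ideal (Polynomial F ⧸ Ideal.span {p ^ k}) := Ideal.span {π p} with hJ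
  have hJk : J ^ k = ⊥ := by
    rw [hJ, Ideal.span_singleton_pow, hpk0, Ideal.span_singleton_eq_bot.mpr rfl]
  -- the polynomial f over R
  set f : (Polynomial F ⧸ Ideal.span {p ^ k})[X] := p.map (algebraMap F (Polynomial F ⧸ Ideal.span {p ^ k})) with hf
  have hfev : ∀ (x : (Polynomial F ⧸ Ideal.span {p ^ k})), f.eval x = Polynomial.aeval x p := fun x => by
    rw [hf, eval_map, aeval_def]
  have hfdev : ∀ (x : (Polynomial F ⧸ Ideal.span {p ^ k})), f.derivative.eval x = Polynomial.aeval x (derivative p) :=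
    fun x => by rw [hf, derivative_map, eval_map, aeval_def]
  -- derivative is a unit at π X
  have hup : IsUnit (π (derivative p)) := by
    have h1 : π v * π (derivative p) + π u * π p = 1 := by
      rw [← map_mul, ← map_mul, ← map_add, huv, map_one]
    have h2 : π v * π (derivative p) = 1 - π u * π p := by linear_combination h1
    have h3 : IsUnit (π v * π (derivative p)) := by
      rw [h2]
      exact IsNilpotent.isUnit_one_sub ((Commute.all _ _).isNilpotent_mul_left ⟨k, hpk0⟩)
    exact isUnit_of_mul_isUnit_right h3
  -- Hensel / Newton: find the root a of p near π X
  obtain ⟨a, hfa, haX⟩ := newton_exists' f J k hJk (π X)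
    (by rw [hfdev, hπg]; exact hup)
    (by rw [hfev, hπg]; exact Ideal.mem_span_singleton_self _)
  have haev : Polynomial.aeval a p = 0 := by rw [← hfev]; exact hfa
  -- the forward map
  set ψ : MvPolynomial (Fin 2) F →ₐ[F] (Polynomial F ⧸ Ideal.span {p ^ k}) := MvPolynomial.aeval ![a, π X] with hψ
  have hψ0 : ψ (MvPolynomial.X 0) = a := by simp [hψ]
  have hψ1 : ψ (MvPolynomial.X 1) = π X := by simp [hψ]
  have hgen1 : ψ (Polynomial.aeval (MvPolynomial.X (0 : Fin 2)) p) = 0 := by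
    rw [← aeval_algHom_apply, hψ0, haev]
  have hgen2 : ψ ((MvPolynomial.X (1 : Fin 2) - MvPolynomial.X (0 : Fin 2)) ^ k) = 0 := by
    rw [map_pow, map_sub, hψ0, hψ1]
    have hmem : (π X - a) ^ k ∈ J ^ k := by
      refine Ideal.pow_mem_pow ?_ k
      have : π X - a = -(a - π X) := by ring
      rw [this]
      exact neg_mem haX
    rw [hJk, Ideal.mem_bot] at hmem
    exact hmem
  have hIker : ∀ g ∈ Ideal.span ({Polynomial.aeval (MvPolynomial.X (0 : Fin 2)) p,
      (MvPolynomial.X (1 : Fin 2) - MvPolynomial.X (0 : Fin 2)) ^ k} :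
      Set (MvPolynomial (Fin 2) F)), ψ g = 0 := by
    intro g hg
    have hle : Ideal.span ({Polynomial.aeval (MvPolynomial.X (0 : Fin 2)) p,
        (MvPolynomial.X (1 : Fin 2) - MvPolynomial.X (0 : Fin 2)) ^ k} :
        Set (MvPolynomial (Fin 2) F)) ≤ RingHom.ker (ψ : MvPolynomial (Fin 2) F →+* (Polynomial F ⧸ Ideal.span {p ^ k})) := by
      rw [Ideal.span_le]
      rintro g (rfl | rfl)
      · simpa [RingHom.mem_ker] using hgen1
      · simpa [RingHom.mem_ker] using hgen2
    exact hle hg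
  set φ : (MvPolynomial (Fin 2) F ⧸ Ideal.span ({Polynomial.aeval (MvPolynomial.X (0 : Fin 2)) p,
      (MvPolynomial.X (1 : Fin 2) - MvPolynomial.X (0 : Fin 2)) ^ k} :
      Set (MvPolynomial (Fin 2) F))) →ₐ[F] (Polynomial F ⧸ Ideal.span {p ^ k}) :=
    Ideal.Quotient.liftₐ _ ψ hIker with hφ
  -- the quotient map on the multivariate side
  set QI : MvPolynomial (Fin 2) F →ₐ[F]
      (MvPolynomial (Fin 2) F ⧸ Ideal.span ({Polynomial.aeval (MvPolynomial.X (0 : Fin 2)) p,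
        (MvPolynomial.X (1 : Fin 2) - MvPolynomial.X (0 : Fin 2)) ^ k} :
        Set (MvPolynomial (Fin 2) F))) :=
    Ideal.Quotient.mkₐ F _ with hQI
  have hQI0 : ∀ g, g ∈ Ideal.span ({Polynomial.aeval (MvPolynomial.X (0 : Fin 2)) p,
      (MvPolynomial.X (1 : Fin 2) - MvPolynomial.X (0 : Fin 2)) ^ k} :
      Set (MvPolynomial (Fin 2) F)) → QI g = 0 := fun g hg => by
    simpa [hQI, Ideal.Quotient.mkₐ_eq_mk] using (Ideal.Quotient.eq_zero_iff_mem).mpr hg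
  have hmem1 : Polynomial.aeval (MvPolynomial.X (0 : Fin 2)) p ∈ Ideal.span
      ({Polynomial.aeval (MvPolynomial.X (0 : Fin 2)) p,
        (MvPolynomial.X (1 : Fin 2) - MvPolynomial.X (0 : Fin 2)) ^ k} :
        Set (MvPolynomial (Fin 2) F)) :=
    Ideal.subset_span (Set.mem_insert _ _)
  have hmem2 : (MvPolynomial.X (1 : Fin 2) - MvPolynomial.X (0 : Fin 2)) ^ k ∈ Ideal.span
      ({Polynomial.aeval (MvPolynomial.X (0 : Fin 2)) p,
        (MvPolynomial.X (1 : Fin 2) - MvPolynomial.X (0 : Fin 2)) ^ k} :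
        Set (MvPolynomial (Fin 2) F)) :=
    Ideal.subset_span (Set.mem_insert_of_mem _ rfl)
  -- p(y) is nilpotent mod I with exponent k
  obtain ⟨g, hg⟩ : (MvPolynomial.X (1 : Fin 2) - MvPolynomial.X (0 : Fin 2)) ∣
      (Polynomial.aeval (MvPolynomial.X (1 : Fin 2)) p -
        Polynomial.aeval (MvPolynomial.X (0 : Fin 2)) p) := by
    have := sub_dvd_eval_sub (MvPolynomial.X (1 : Fin 2)) (MvPolynomial.X (0 : Fin 2))
      (p.map (algebraMap F (MvPolynomial (Fin 2) F)))
    rwa [eval_map, eval_map, ← aeval_def, ← aeval_def] at this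
  have hQIy : QI (Polynomial.aeval (MvPolynomial.X (1 : Fin 2)) p) =
      QI (MvPolynomial.X (1 : Fin 2) - MvPolynomial.X (0 : Fin 2)) * QI g := by
    have h1 : Polynomial.aeval (MvPolynomial.X (1 : Fin 2)) p =
        Polynomial.aeval (MvPolynomial.X (0 : Fin 2)) p +
        (MvPolynomial.X (1 : Fin 2) - MvPolynomial.X (0 : Fin 2)) * g := by
      linear_combination hg
    rw [h1, map_add, map_mul, hQI0 _ hmem1, zero_add]
  have hpyk : QI (Polynomial.aeval (MvPolynomial.X (1 : Fin 2)) p) ^ k = 0 := by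
    rw [hQIy, mul_pow, ← map_pow, hQI0 _ hmem2, zero_mul]
  -- the backward map
  set χ : Polynomial F →ₐ[F]
      (MvPolynomial (Fin 2) F ⧸ Ideal.span ({Polynomial.aeval (MvPolynomial.X (0 : Fin 2)) p,
        (MvPolynomial.X (1 : Fin 2) - MvPolynomial.X (0 : Fin 2)) ^ k} :
        Set (MvPolynomial (Fin 2) F))) :=
    Polynomial.aeval (QI (MvPolynomial.X (1 : Fin 2))) with hχ
  have hχg : ∀ g : Polynomial F, χ g = QI (Polynomial.aeval (MvPolynomial.X (1 : Fin 2)) g) :=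
    fun g => by rw [hχ, aeval_algHom_apply]
  have hχpk : χ (p ^ k) = 0 := by rw [map_pow, hχg, hpyk]
  have hχker : ∀ g ∈ Ideal.span ({p ^ k} : Set (Polynomial F)), χ g = 0 := by
    intro g hg
    obtain ⟨c, rfl⟩ := Ideal.mem_span_singleton.mp hg
    rw [map_mul, hχpk, zero_mul]
  set φ' : (Polynomial F ⧸ Ideal.span {p ^ k}) →ₐ[F] (MvPolynomial (Fin 2) F ⧸ Ideal.span
      ({Polynomial.aeval (MvPolynomial.X (0 : Fin 2)) p,
        (MvPolynomial.X (1 : Fin 2) - MvPolynomial.X (0 : Fin 2)) ^ k} :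
        Set (MvPolynomial (Fin 2) F))) :=
    Ideal.Quotient.liftₐ _ χ hχker with hφ'
  have hφψ : ∀ g, φ (QI g) = ψ g := fun g => by
    simp [hφ, hQI, Ideal.Quotient.mkₐ_eq_mk, Ideal.Quotient.liftₐ_apply,
      Ideal.Quotient.lift_mk]
    rfl
  have hφ'π : ∀ g, φ' (π g) = χ g := fun g => by
    simp [hφ', hπ, Ideal.Quotient.mkₐ_eq_mk, Ideal.Quotient.liftₐ_apply,
      Ideal.Quotient.lift_mk]
    rfl
  clear_value π J f ψ φ QI χ φ'
  -- φ ∘ φ' = id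
  have h1 : φ.comp φ' = AlgHom.id F _ := by
    refine Ideal.Quotient.algHom_ext F ?_
    refine Polynomial.algHom_ext ?_
    simp only [AlgHom.coe_comp, Function.comp_apply, AlgHom.id_apply]
    rw [← hπ, hφ'π, hχg, Polynomial.aeval_X, hφψ, hψ1]
  -- φ' ∘ φ = id
  have h2 : φ'.comp φ = AlgHom.id F _ := by
    refine Ideal.Quotient.algHom_ext F ?_
    refine MvPolynomial.algHom_ext fun i => ?_
    fin_cases i
    · -- i = 0
      simp only [AlgHom.coe_comp, Function.comp_apply, AlgHom.id_apply]
      rw [← hQI]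
      show φ' (φ (QI (MvPolynomial.X 0))) = QI (MvPolynomial.X 0)
      rw [hφψ, hψ0]
      obtain ⟨A, hA⟩ := Ideal.Quotient.mkₐ_surjective F (Ideal.span {p ^ k}) a
      rw [← hπ] at hA
      rw [← hA, hφ'π]
      -- goal : χ A = QI (X 0); use uniqueness of Hensel root
      set S := MvPolynomial (Fin 2) F ⧸ Ideal.span
        ({Polynomial.aeval (MvPolynomial.X (0 : Fin 2)) p,
          (MvPolynomial.X (1 : Fin 2) - MvPolynomial.X (0 : Fin 2)) ^ k} :
          Set (MvPolynomial (Fin 2) F)) with hS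
      set fS : S[X] := p.map (algebraMap F S) with hfS
      have hfSev : ∀ (x : S), fS.eval x = Polynomial.aeval x p := fun x => by
        rw [hfS, eval_map]; exact (aeval_def x p).symm
      have hfSdev : ∀ (x : S), fS.derivative.eval x = Polynomial.aeval x (derivative p) :=
        fun x => by rw [hfS, derivative_map, eval_map]; exact (aeval_def x (derivative p)).symm
      have hx0 : Polynomial.aeval (QI (MvPolynomial.X (0 : Fin 2))) p = 0 := by
        rw [aeval_algHom_apply]
        exact hQI0 _ hmem1
      have hroot2 : Polynomial.aeval (χ A) p = 0 := by
        rw [aeval_algHom_apply]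
        apply hχker
        rw [← Ideal.Quotient.eq_zero_iff_mem]
        have : π (Polynomial.aeval A p) = Polynomial.aeval (π A) p := by
          rw [aeval_algHom_apply]
        rw [← Ideal.Quotient.mkₐ_eq_mk F, ← hπ, this, hA, haev]
      have hunit : IsUnit (Polynomial.aeval (QI (MvPolynomial.X (0 : Fin 2))) (derivative p)) := by
        have h1' : Polynomial.aeval (QI (MvPolynomial.X (0 : Fin 2))) v *
            Polynomial.aeval (QI (MvPolynomial.X (0 : Fin 2))) (derivative p) +
            Polynomial.aeval (QI (MvPolynomial.X (0 : Fin 2))) u *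
            Polynomial.aeval (QI (MvPolynomial.X (0 : Fin 2))) p = 1 := by
          rw [← map_mul, ← map_mul, ← map_add, huv, map_one]
        rw [hx0, mul_zero, add_zero] at h1'
        exact isUnit_of_mul_isUnit_right (by rw [h1']; exact isUnit_one)
      -- nilpotent difference
      have hnil : IsNilpotent (χ A - QI (MvPolynomial.X (0 : Fin 2))) := by
        -- A - X ∈ span {p} in F[X]
        have haX' : a - π X ∈ Ideal.span {π p} := by rw [← hJ]; exact haX
        obtain ⟨c, hc⟩ := Ideal.mem_span_singleton'.mp haX'
        obtain ⟨C, hC⟩ := Ideal.Quotient.mkₐ_surjective F (Ideal.span {p ^ k}) c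
        rw [← hπ] at hC
        have hπAX : π (A - X - C * p) = 0 := by
          rw [map_sub, map_sub, map_mul, hA, hC]
          linear_combination -hc
        have hmem : A - X - C * p ∈ Ideal.span ({p ^ k} : Set (Polynomial F)) := by
          rw [← Ideal.Quotient.eq_zero_iff_mem, ← Ideal.Quotient.mkₐ_eq_mk F, ← hπ, hπAX]
        obtain ⟨D, hD⟩ := Ideal.mem_span_singleton'.mp hmem
        have hAeq : A = X + C * p + D * p ^ k := by linear_combination -hD
        have hχA : χ A = QI (MvPolynomial.X 1) + χ C * χ p + χ D * (χ p) ^ k := by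
          rw [hAeq]
          simp only [map_add, map_mul, map_pow, hχ, Polynomial.aeval_X]
        have hχpnil : IsNilpotent (χ p) := ⟨k, by rw [hχg, hpyk]⟩
        have hχpk0 : (χ p) ^ k = 0 := by rw [hχg, hpyk]
        have hyx : IsNilpotent (QI (MvPolynomial.X (1 : Fin 2)) -
            QI (MvPolynomial.X (0 : Fin 2))) := ⟨k, by
          rw [← map_sub, ← map_pow]
          exact hQI0 _ hmem2⟩
        have : χ A - QI (MvPolynomial.X (0 : Fin 2)) =
            (QI (MvPolynomial.X 1) - QI (MvPolynomial.X (0 : Fin 2))) + χ C * χ p +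
              χ D * (χ p) ^ k := by
          rw [hχA]; ring
        rw [this, hχpk0, mul_zero, add_zero]
        exact Commute.isNilpotent_add (Commute.all _ _) hyx
          ((Commute.all _ _).isNilpotent_mul_left hχpnil)
      have := hensel_unique' fS (QI (MvPolynomial.X (0 : Fin 2))) (χ A)
        (by rw [hfSev, hx0]) (by rw [hfSev, hroot2])
        (by rw [hfSdev]; exact hunit) hnil
      exact this
    · -- i = 1
      simp only [AlgHom.coe_comp, Function.comp_apply, AlgHom.id_apply]
      rw [← hQI]
      show φ' (φ (QI (MvPolynomial.X 1))) = QI (MvPolynomial.X 1)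
      rw [hφψ, hψ1, hφ'π, hχg, Polynomial.aeval_X]
  exact ⟨AlgEquiv.ofAlgHom φ φ' h1 h2⟩
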